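/- Let l be an odd positive integer, written l = l₁ l₂² with l₁, l₂ odd and l₁ squarefree. For every complex s with Re(s) > 1, ∑_{m ≥ 1, m odd} d(l₁ m²) m^{−s} ∏_{p | lm} (p/(p+1)) = d(l₁) ζ(s)³ η(s; l), where η(s; l) = ∏_p η_p(s; l) with η_2(s; l) = (1 − 2^{−s})³, and for odd primes p: η_p(s; l) = 1 − (4/(p^s(p+1)))(1 − 1/p^s) + 1/(p^s(p+1)) − 1/p^{2s} − 1/(p^{3s}(p+1)) if p ∤ l; η_p(s; l) = (p/(p+1))(1 − 1/p^s) if p | l₁; and η_p(s; l) = (p/(p+1))(1 − 1/p^{2s}) if p | l but p ∤ l₁. Here d(n) denotes the number of divisors of n, and the Euler product defining η(s; l) converges absolutely for Re(s) > 1/2. -/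

import Mathlib

/-!
For odd `m` the summand factors as `d(l₁) ∏_{p ∣ l} p/(p+1) · c(m) m^{-s}` with `c` multiplicative
(`localCoeff`): since `l₁` is squarefree, `d(l₁ p^{2a}) / d(l₁)` is `a + 1` or `2a + 1` according
as `p ∣ l₁` or not, and a factor `p/(p+1)` enters for the primes of `m` not dividing `l`; even `m`
are killed by `c(2^a) = 0`. As `|c(p^a)| ≤ 2a + 1 ≤ d₃(p^a)`, the series converges absolutely for
`Re s > 1` and has an Euler product, which is compared factor by factor with that of `ζ(s)³`:
summing `∑ (a + 1) x^a` and `∑ (2a + 1) x^a` at `x = p^{-s}` gives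
`(p/(p+1) if p ∣ l, else 1) · ∑ₐ c(p^a) p^{-as} = (1 - p^{-s})^{-3} η_p(s; l)`.
The product `∏ η_p` converges for `Re s > 1/2` since `η_p - 1 = O(p^{-1-σ} + p^{-2σ})` for `p ∤ 2l`.
-/

open scoped BigOperators Classical

noncomputable section

/-- The Euler factor `η_p(s; l)` of Lemma 5.1, where `l = l₁ l₂²` with `l₁` squarefree. -/
def etaP (l l₁ : ℕ) (s : ℂ) (p : ℕ) : ℂ :=
  if p = 2 then (1 - (2 : ℂ) ^ (-s)) ^ 3
  else if p ∣ l₁ then ((p : ℂ) / ((p : ℂ) + 1)) * (1 - (p : ℂ) ^ (-s))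
  else if p ∣ l then ((p : ℂ) / ((p : ℂ) + 1)) * (1 - (p : ℂ) ^ (-(2 * s)))
  else
    1 - (4 / ((p : ℂ) ^ s * ((p : ℂ) + 1))) * (1 - (p : ℂ) ^ (-s))
      + 1 / ((p : ℂ) ^ s * ((p : ℂ) + 1)) - (p : ℂ) ^ (-(2 * s))
      - 1 / ((p : ℂ) ^ (3 * s) * ((p : ℂ) + 1))

open LSeries ArithmeticFunction
open scoped ArithmeticFunction.zeta ArithmeticFunction.sigma LSeries.notation

section Geometric

variable {x : ℂ} (hx : ‖x‖ < 1)
include hx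

lemma hasSum_add_one_mul_geometric :
    HasSum (fun e : ℕ => ((e : ℂ) + 1) * x ^ e) (1 / (1 - x) ^ 2) := by
  have h1 : (1 : ℂ) - x ≠ 0 := sub_ne_zero.2 fun h => by simp [← h] at hx
  have h := (hasSum_coe_mul_geometric_of_norm_lt_one hx).add (hasSum_geometric_of_norm_lt_one hx)
  rw [show x / (1 - x) ^ 2 + (1 - x)⁻¹ = 1 / (1 - x) ^ 2 by field_simp; ring] at h
  exact h.congr_fun fun e => by ring

lemma hasSum_two_mul_add_one_mul_geometric :
    HasSum (fun e : ℕ => (2 * (e : ℂ) + 1) * x ^ e) ((1 + x) / (1 - x) ^ 2) := by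
  have h1 : (1 : ℂ) - x ≠ 0 := sub_ne_zero.2 fun h => by simp [← h] at hx
  have h := ((hasSum_coe_mul_geometric_of_norm_lt_one hx).mul_left 2).add
    (hasSum_geometric_of_norm_lt_one hx)
  rw [show 2 * (x / (1 - x) ^ 2) + (1 - x)⁻¹ = (1 + x) / (1 - x) ^ 2 by field_simp; ring] at h
  exact h.congr_fun fun e => by ring

end Geometric

lemma natCast_pow_cpow (p e : ℕ) (s : ℂ) : ((p ^ e : ℕ) : ℂ) ^ s = ((p : ℂ) ^ s) ^ e := by
  rw [Nat.cast_pow, ← Complex.natCast_cpow_natCast_mul, Complex.cpow_nat_mul]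

lemma norm_natCast_cpow_neg_lt_one {p : ℕ} (hp : 1 < p) {s : ℂ} (hs : 0 < s.re) :
    ‖(p : ℂ) ^ (-s)‖ < 1 := by
  rw [Complex.norm_natCast_cpow_of_pos (by omega), Complex.neg_re]
  exact Real.rpow_lt_one_of_one_lt_of_neg (by exact_mod_cast hp) (by linarith)

lemma Nat.card_divisors_eq_prod_of_subset {n : ℕ} (hn : n ≠ 0) {T : Finset ℕ}
    (hT : n.primeFactors ⊆ T) : n.divisors.card = ∏ p ∈ T, (n.factorization p + 1) := by
  rw [Nat.card_divisors hn]
  refine Finset.prod_subset hT fun p _ hp => ?_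
  rw [Finsupp.notMem_support_iff.1 (n.support_factorization ▸ hp), zero_add]

lemma Nat.prod_primeFactors_eq_prod_ite {M : Type*} [CommMonoid M] {n : ℕ} (hn : n ≠ 0)
    {T : Finset ℕ} (hT : n.primeFactors ⊆ T) (hprime : ∀ p ∈ T, p.Prime) (g : ℕ → M) :
    ∏ p ∈ n.primeFactors, g p = ∏ p ∈ T, if p ∣ n then g p else 1 := by
  rw [← Finset.prod_filter]
  congr 1
  ext p
  simp only [Finset.mem_filter, Nat.mem_primeFactors]
  exact ⟨fun h => ⟨hT (Nat.mem_primeFactors.2 h), h.2.1⟩, fun h => ⟨hprime p h.1, h.2, hn⟩⟩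

lemma Nat.Primes.eventually_not_dvd {n : ℕ} (hn : n ≠ 0) :
    ∀ᶠ p : Nat.Primes in Filter.cofinite, ¬(p : ℕ) ∣ n :=
  ((n.divisors.finite_toSet.preimage Nat.Primes.coe_nat_injective.injOn).subset
    fun _ hp => Nat.mem_divisors.2 ⟨hp, hn⟩).eventually_cofinite_notMem

lemma Nat.Primes.hasProd_ite_dvd {M : Type*} [CommMonoid M] [TopologicalSpace M] {n : ℕ}
    (hn : n ≠ 0) (g : ℕ → M) :
    HasProd (fun p : Nat.Primes => if (p : ℕ) ∣ n then g p else 1) (∏ p ∈ n.primeFactors, g p) := by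
  have : HasProd _ _ := hasProd_prod_of_ne_finset_one
    (f := fun p : Nat.Primes => if (p : ℕ) ∣ n then g p else 1)
    (s := (n.primeFactors.subtype Nat.Prime : Finset Nat.Primes))
    fun p hp => if_neg fun h => hp (Finset.mem_subtype.2 (Nat.mem_primeFactors.2 ⟨p.2, h, hn⟩))
  convert this using 1
  refine Eq.trans ?_ (Finset.prod_subtype_eq_prod_filter (s := n.primeFactors) (p := Nat.Prime)
    fun p => if p ∣ n then g p else 1).symm
  rw [Finset.filter_true_of_mem fun p hp => Nat.prime_of_mem_primeFactors hp]
  exact (Finset.prod_congr rfl fun p hp => if_pos (Nat.dvd_of_mem_primeFactors hp)).symm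

lemma two_mul_add_one_le_zeta_cube_prime_pow {p : ℕ} (hp : p.Prime) (a : ℕ) :
    2 * a + 1 ≤ (ζ * ζ * ζ : ArithmeticFunction ℕ) (p ^ a) := by
  have hσ : (ζ * ζ : ArithmeticFunction ℕ) = σ 0 := by
    rw [← zeta_mul_pow_eq_sigma, pow_zero_eq_zeta]
  rw [hσ, mul_zeta_apply, Nat.sum_divisors_prime_pow hp]
  simp only [sigma_zero_apply_prime_pow hp]
  induction a with
  | zero => simp
  | succ a ih => rw [Finset.sum_range_succ]; omega

section Coefficients

variable (l l₁ : ℕ)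

def localCoeff (p a : ℕ) : ℂ :=
  if a = 0 then 1
  else if p = 2 then 0
  else if p ∣ l₁ then a + 1
  else if p ∣ l then 2 * a + 1
  else (2 * a + 1) * (p / (p + 1))

/-- `coeff l l₁ 0 = 1` is a junk value; only `LSeries.term (coeff l l₁) s`, which vanishes at `0`,
is used. -/
def coeff (n : ℕ) : ℂ := n.factorization.prod (localCoeff l l₁)

lemma coeff_mul {m n : ℕ} (h : m.Coprime n) :
    coeff l l₁ (m * n) = coeff l l₁ m * coeff l l₁ n := by
  rw [coeff, Nat.factorization_mul_of_coprime h, Finsupp.prod_add_index_of_disjoint]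
  · rfl
  · simpa only [Nat.support_factorization] using h.disjoint_primeFactors

lemma coeff_prime_pow {p : ℕ} (hp : p.Prime) (a : ℕ) :
    coeff l l₁ (p ^ a) = localCoeff l l₁ p a := by
  rw [coeff, hp.factorization_pow, Finsupp.prod_single_index (by simp [localCoeff])]

lemma coeff_eq_zero_of_even {n : ℕ} (hn : n ≠ 0) (he : Even n) : coeff l l₁ n = 0 := by
  have h2 : 2 ∈ n.factorization.support := by
    rw [Nat.support_factorization, Nat.mem_primeFactors]
    exact ⟨Nat.prime_two, he.two_dvd, hn⟩
  refine Finset.prod_eq_zero h2 ?_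
  rw [localCoeff, if_neg (Finsupp.mem_support_iff.1 h2), if_pos rfl]

lemma norm_localCoeff_le (p a : ℕ) : ‖localCoeff l l₁ p a‖ ≤ 2 * a + 1 := by
  have hw : ‖(p : ℂ) / (p + 1)‖ ≤ 1 := by
    rw [norm_div, show (p : ℂ) + 1 = ((p + 1 : ℕ) : ℂ) by push_cast; ring,
      Complex.norm_natCast, Complex.norm_natCast]
    exact div_le_one_of_le₀ (by norm_cast; omega) (by positivity)
  unfold localCoeff
  split_ifs
  · simp
  · rw [norm_zero]; positivity
  · norm_cast; omega
  · norm_cast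
  · rw [norm_mul]
    norm_cast
    push_cast at hw ⊢
    exact mul_le_of_le_one_right (by positivity) hw

lemma norm_coeff_le {n : ℕ} (hn : n ≠ 0) :
    ‖coeff l l₁ n‖ ≤ (ζ * ζ * ζ : ArithmeticFunction ℕ) n := by
  have hd3 : (ζ * ζ * ζ : ArithmeticFunction ℕ).IsMultiplicative :=
    (isMultiplicative_zeta.mul isMultiplicative_zeta).mul isMultiplicative_zeta
  rw [coeff, hd3.multiplicative_factorization _ hn, Finsupp.prod, Finsupp.prod, Nat.cast_prod]
  refine (Finset.norm_prod_le _ _).trans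
    (Finset.prod_le_prod (fun _ _ => norm_nonneg _) fun p hp => ?_)
  have hp : p.Prime := Nat.prime_of_mem_primeFactors (Nat.support_factorization n ▸ hp)
  exact (norm_localCoeff_le l l₁ _ _).trans
    (by exact_mod_cast two_mul_add_one_le_zeta_cube_prime_pow hp _)

lemma LSeriesSummable_zeta_cube {s : ℂ} (hs : 1 < s.re) :
    LSeriesSummable (fun n => ((ζ * ζ * ζ : ArithmeticFunction ℕ) n : ℂ)) s := by
  have hζ : LSeriesSummable ↗(ζ : ArithmeticFunction ℂ) s := by
    simpa only [natCoe_apply] using LSeriesSummable_zeta_iff.2 hs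
  simpa only [← natCoe_mul, natCoe_apply] using LSeriesSummable_mul (LSeriesSummable_mul hζ hζ) hζ

lemma summable_norm_term_coeff {s : ℂ} (hs : 1 < s.re) :
    Summable (fun n => ‖term (coeff l l₁) s n‖) := by
  refine (summable_norm_iff.2 (LSeriesSummable_zeta_cube hs)).of_nonneg_of_le
    (fun _ => norm_nonneg _) fun n => ?_
  rcases eq_or_ne n 0 with rfl | hn
  · simp
  · exact norm_term_le s (by rw [Complex.norm_natCast]; exact norm_coeff_le l l₁ hn)

lemma term_coeff_mul (s : ℂ) {m n : ℕ} (h : m.Coprime n) :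
    term (coeff l l₁) s (m * n) = term (coeff l l₁) s m * term (coeff l l₁) s n := by
  rcases eq_or_ne m 0 with rfl | hm
  · simp
  rcases eq_or_ne n 0 with rfl | hn
  · simp
  rw [term_of_ne_zero (mul_ne_zero hm hn), term_of_ne_zero hm, term_of_ne_zero hn,
    coeff_mul l l₁ h, Nat.cast_mul, Complex.natCast_mul_natCast_cpow, mul_div_mul_comm]

lemma term_coeff_prime_pow (s : ℂ) {p : ℕ} (hp : p.Prime) (e : ℕ) :
    term (coeff l l₁) s (p ^ e) = localCoeff l l₁ p e * ((p : ℂ) ^ (-s)) ^ e := by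
  rw [term_of_ne_zero (pow_ne_zero _ hp.ne_zero), coeff_prime_pow l l₁ hp, natCast_pow_cpow,
    Complex.cpow_neg, inv_pow, div_eq_mul_inv]

lemma term_coeff_one (s : ℂ) : term (coeff l l₁) s 1 = 1 := by
  simp [coeff]

end Coefficients

lemma summand_localFactor_eq {l l₁ p : ℕ} (hsf : Squarefree l₁) (hl₁ : l₁ ∣ l) (hp : p.Prime)
    (h2 : p ≠ 2) {a : ℕ} (hpa : p ∣ l ∨ a ≠ 0) :
    ((l₁.factorization p + 2 * a + 1 : ℕ) : ℂ) * ((p : ℂ) / (p + 1))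
      = (l₁.factorization p + 1 : ℕ) * (if p ∣ l then (p : ℂ) / (p + 1) else 1)
        * localCoeff l l₁ p a := by
  have hv : l₁.factorization p = if p ∣ l₁ then 1 else 0 := by
    split_ifs with h
    · exact le_antisymm (hsf.natFactorization_le_one p) (hp.factorization_pos_of_dvd hsf.ne_zero h)
    · exact Nat.factorization_eq_zero_of_not_dvd h
  have hl₁l : p ∣ l₁ → p ∣ l := fun h => h.trans hl₁
  rw [hv]
  unfold localCoeff
  split_ifs <;> simp_all <;> ring

lemma summand_eq {l l₁ : ℕ} (hl : Odd l) (hsf : Squarefree l₁) (hl₁ : l₁ ∣ l) (s : ℂ) (m : ℕ) :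
    (if Odd m then ((l₁ * m ^ 2).divisors.card : ℂ) * (m : ℂ) ^ (-s) *
        ∏ p ∈ (l * m).primeFactors, ((p : ℂ) / ((p : ℂ) + 1))
      else 0)
      = ((l₁.divisors.card : ℂ) * ∏ p ∈ l.primeFactors, ((p : ℂ) / ((p : ℂ) + 1)))
        * term (coeff l l₁) s m := by
  have hl0 : l ≠ 0 := hl.pos.ne'
  have hl₁0 : l₁ ≠ 0 := hsf.ne_zero
  rcases eq_or_ne m 0 with rfl | hm0
  · simp
  by_cases hm : Odd m
  swap
  · rw [if_neg hm, term_of_ne_zero hm0,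
      coeff_eq_zero_of_even l l₁ hm0 (Nat.not_odd_iff_even.1 hm), zero_div, mul_zero]
  rw [if_pos hm, term_of_ne_zero hm0, Complex.cpow_neg, div_eq_mul_inv]
  suffices key : ((l₁ * m ^ 2).divisors.card : ℂ) *
      ∏ p ∈ (l * m).primeFactors, ((p : ℂ) / ((p : ℂ) + 1))
      = (l₁.divisors.card : ℂ) * (∏ p ∈ l.primeFactors, ((p : ℂ) / ((p : ℂ) + 1)))
        * coeff l l₁ m by
    linear_combination ((m : ℂ) ^ s)⁻¹ * key
  set T := (l * m).primeFactors
  have hlm0 : l * m ≠ 0 := mul_ne_zero hl0 hm0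
  have hlT : l.primeFactors ⊆ T := Nat.primeFactors_mono (dvd_mul_right l m) hlm0
  have hmT : m.primeFactors ⊆ T := Nat.primeFactors_mono (dvd_mul_left m l) hlm0
  have hl₁mT : (l₁ * m ^ 2).primeFactors ⊆ T := by
    rw [Nat.primeFactors_mul hl₁0 (pow_ne_zero 2 hm0), Nat.primeFactors_pow m two_ne_zero]
    exact Finset.union_subset ((Nat.primeFactors_mono hl₁ hl0).trans hlT) hmT
  rw [Nat.card_divisors_eq_prod_of_subset (mul_ne_zero hl₁0 (pow_ne_zero 2 hm0)) hl₁mT,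
    Nat.card_divisors_eq_prod_of_subset hl₁0 ((Nat.primeFactors_mono hl₁ hl0).trans hlT),
    Nat.prod_primeFactors_eq_prod_ite hl0 hlT (fun p hp => Nat.prime_of_mem_primeFactors hp),
    coeff, Finsupp.prod_of_support_subset _ (m.support_factorization ▸ hmT) (localCoeff l l₁)
      (fun _ _ => if_pos rfl),
    Nat.cast_prod, Nat.cast_prod, ← Finset.prod_mul_distrib, ← Finset.prod_mul_distrib,
    ← Finset.prod_mul_distrib]
  refine Finset.prod_congr rfl fun p hpT => ?_
  have hp := Nat.prime_of_mem_primeFactors hpT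
  have hplm := Nat.dvd_of_mem_primeFactors hpT
  have h2 : p ≠ 2 := by
    rintro rfl
    exact Nat.not_even_iff_odd.2 (hl.mul hm) (even_iff_two_dvd.2 hplm)
  have hpa : p ∣ l ∨ m.factorization p ≠ 0 :=
    (hp.dvd_mul.1 hplm).imp_right fun h => (hp.factorization_pos_of_dvd hm0 h).ne'
  rw [Nat.factorization_mul hl₁0 (pow_ne_zero 2 hm0), Nat.factorization_pow, Finsupp.add_apply,
    Finsupp.smul_apply, smul_eq_mul]
  exact summand_localFactor_eq hsf hl₁ hp h2 hpa

lemma etaP_eq_one_add {l l₁ p : ℕ} (hp : p ≠ 0) (h2 : p ≠ 2) (h₁ : ¬p ∣ l₁) (hl : ¬p ∣ l)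
    (s : ℂ) :
    etaP l l₁ s p = 1 + ((p : ℂ) ^ (-s) * (4 * (p : ℂ) ^ (-s) - 3 - ((p : ℂ) ^ (-s)) ^ 2)
      / ((p : ℂ) + 1) - ((p : ℂ) ^ (-s)) ^ 2) := by
  have hps : (p : ℂ) ^ s ≠ 0 := by simp [Complex.cpow_eq_zero_iff, hp]
  have hp1 : (p : ℂ) + 1 ≠ 0 := by norm_cast
  rw [etaP, if_neg h2, if_neg h₁, if_neg hl, show -(2 * s) = (2 : ℕ) * -s by push_cast; ring,
    show 3 * s = (3 : ℕ) * s by norm_num, Complex.cpow_nat_mul, Complex.cpow_nat_mul,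
    Complex.cpow_neg]
  field_simp
  ring

lemma norm_etaP_sub_one_le {l l₁ p : ℕ} (hp : 1 < p) (h2 : p ≠ 2) (h₁ : ¬p ∣ l₁) (hl : ¬p ∣ l)
    {s : ℂ} (hs : 0 ≤ s.re) :
    ‖etaP l l₁ s p - 1‖ ≤ 8 * (p : ℝ) ^ (-s.re - 1) + (p : ℝ) ^ (-s.re * 2) := by
  set x := (p : ℂ) ^ (-s)
  have hp0 : (0 : ℝ) < p := by norm_cast; omega
  have hx : ‖x‖ = (p : ℝ) ^ (-s.re) := by
    rw [Complex.norm_natCast_cpow_of_pos (by omega), Complex.neg_re]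
  have hx1 : ‖x‖ ≤ 1 := hx ▸ Real.rpow_le_one_of_one_le_of_nonpos (by norm_cast; omega)
    (by linarith)
  have hquad : ‖4 * x - 3 - x ^ 2‖ ≤ 8 := by
    calc ‖4 * x - 3 - x ^ 2‖ ≤ 4 * ‖x‖ + 3 + ‖x‖ ^ 2 := by
          refine (norm_sub_le _ _).trans ?_
          rw [norm_pow]
          gcongr
          refine (norm_sub_le _ _).trans ?_
          simp
      _ ≤ 8 := by nlinarith [norm_nonneg x]
  have hp1 : ‖(p : ℂ) + 1‖ = p + 1 := by norm_cast
  rw [etaP_eq_one_add (by omega) h2 h₁ hl, add_sub_cancel_left]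
  calc _ ≤ ‖x‖ * 8 / (p + 1) + ‖x‖ ^ 2 := by
        refine (norm_sub_le _ _).trans ?_
        rw [norm_div, norm_mul, norm_pow, hp1]
        gcongr
    _ ≤ 8 * (‖x‖ / p) + ‖x‖ ^ 2 := by
        rw [mul_comm, mul_div_assoc]
        gcongr
        linarith
    _ = 8 * (p : ℝ) ^ (-s.re - 1) + (p : ℝ) ^ (-s.re * 2) := by
        rw [hx, Real.rpow_sub_one hp0.ne', ← Real.rpow_mul_natCast hp0.le]
        norm_num

lemma eulerFactor_eq {l l₁ : ℕ} (hl : Odd l) (hl₁ : l₁ ∣ l) {s : ℂ} (hs : 0 < s.re) {p : ℕ}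
    (hp : p.Prime) :
    (if p ∣ l then (p : ℂ) / (p + 1) else 1) * ∑' e, term (coeff l l₁) s (p ^ e)
      = ((1 - (p : ℂ) ^ (-s))⁻¹) ^ 3 * etaP l l₁ s p := by
  set x := (p : ℂ) ^ (-s) with hxdef
  have hx : ‖x‖ < 1 := norm_natCast_cpow_neg_lt_one hp.one_lt hs
  have h1x : 1 - x ≠ 0 := sub_ne_zero.2 fun h => by simp [← h] at hx
  have hp1 : (p : ℂ) + 1 ≠ 0 := by norm_cast
  simp only [term_coeff_prime_pow l l₁ s hp]
  by_cases h2 : p = 2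
  · subst h2
    have h2l : ¬2 ∣ l := Nat.not_even_iff_odd.2 hl ∘ even_iff_two_dvd.2
    have hH : HasSum (fun e => localCoeff l l₁ 2 e * x ^ e) 1 :=
      (hasSum_ite_eq 0 1).congr_fun fun e => by
        rcases eq_or_ne e 0 with rfl | he <;> simp [localCoeff, *]
    rw [if_neg h2l, hH.tsum_eq, etaP, if_pos rfl, show (2 : ℂ) ^ (-s) = x by simp [hxdef]]
    field_simp
  by_cases h₁ : p ∣ l₁
  · have hH : HasSum (fun e => localCoeff l l₁ p e * x ^ e) (1 / (1 - x) ^ 2) :=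
      (hasSum_add_one_mul_geometric hx).congr_fun fun e => by
        rcases eq_or_ne e 0 with rfl | he <;> simp [localCoeff, *]
    rw [if_pos (h₁.trans hl₁), hH.tsum_eq, etaP, if_neg h2, if_pos h₁]
    field_simp
    ring
  by_cases hpl : p ∣ l
  · have hH : HasSum (fun e => localCoeff l l₁ p e * x ^ e) ((1 + x) / (1 - x) ^ 2) :=
      (hasSum_two_mul_add_one_mul_geometric hx).congr_fun fun e => by
        rcases eq_or_ne e 0 with rfl | he <;> simp [localCoeff, *]
    rw [if_pos hpl, hH.tsum_eq, etaP, if_neg h2, if_neg h₁, if_pos hpl,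
      show -(2 * s) = (2 : ℕ) * -s by push_cast; ring, Complex.cpow_nat_mul]
    field_simp
    ring
  · have hH : HasSum (fun e => localCoeff l l₁ p e * x ^ e)
        ((p : ℂ) / (p + 1) * ((1 + x) / (1 - x) ^ 2) + (1 - (p : ℂ) / (p + 1))) :=
      (((hasSum_two_mul_add_one_mul_geometric hx).mul_left _).add (hasSum_ite_eq 0 _)).congr_fun
        fun e => by
          rcases eq_or_ne e 0 with rfl | he
          · simp [localCoeff]
          · simp [localCoeff, *]; ring
    rw [if_neg hpl, hH.tsum_eq, etaP_eq_one_add hp.ne_zero h2 h₁ hpl]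
    field_simp
    ring

lemma multipliable_etaP {l l₁ : ℕ} (hl : l ≠ 0) (hl₁ : l₁ ∣ l) {s : ℂ} (hs : 1 / 2 < s.re) :
    Multipliable (fun p : Nat.Primes => etaP l l₁ s p) := by
  have hsum : Summable (fun p : Nat.Primes => 8 * (p : ℝ) ^ (-s.re - 1) + (p : ℝ) ^ (-s.re * 2)) :=
    ((Nat.Primes.summable_rpow.2 (by linarith)).mul_left 8).add
      (Nat.Primes.summable_rpow.2 (by linarith))
  have hsub : Summable (fun p : Nat.Primes => etaP l l₁ s p - 1) := by
    refine hsum.of_norm_bounded_eventually ?_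
    filter_upwards [Nat.Primes.eventually_not_dvd (show 2 * l ≠ 0 by omega)] with p hp
    have hpl : ¬(p : ℕ) ∣ l := fun h => hp (h.mul_left 2)
    exact norm_etaP_sub_one_le p.2.one_lt (fun h => hp (h ▸ dvd_mul_right 2 l))
      (fun h => hpl (h.trans hl₁)) hpl (by linarith)
  simpa using Complex.multipliable_one_add_of_summable hsub

/-- Lemma 5.1: for `Re(s) > 1`,
`∑_{m odd} d(l₁m²) m^{-s} ∏_{p ∣ lm} p/(p+1) = d(l₁) ζ(s)³ η(s; l)`, where
`η(s; l) = ∏_p η_p(s; l)` converges absolutely for `Re(s) > 1/2`. -/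
theorem stmt11 (l l₁ l₂ : ℕ) (hl₁ : Odd l₁) (hl₂ : Odd l₂) (hsf : Squarefree l₁)
    (hfact : l = l₁ * l₂ ^ 2) (s : ℂ) (hs : 1 < s.re) :
    Summable (fun m : ℕ =>
      if Odd m then ((l₁ * m ^ 2).divisors.card : ℂ) * (m : ℂ) ^ (-s) *
        ∏ p ∈ (l * m).primeFactors, ((p : ℂ) / ((p : ℂ) + 1))
      else 0) ∧
    (∑' m : ℕ,
      if Odd m then ((l₁ * m ^ 2).divisors.card : ℂ) * (m : ℂ) ^ (-s) *
        ∏ p ∈ (l * m).primeFactors, ((p : ℂ) / ((p : ℂ) + 1))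
      else 0) =
      (l₁.divisors.card : ℂ) * (riemannZeta s) ^ 3 * ∏' p : Nat.Primes, etaP l l₁ s (p : ℕ) ∧
    ∀ s' : ℂ, 1 / 2 < s'.re → Multipliable (fun p : Nat.Primes => etaP l l₁ s' (p : ℕ)) := by
  have hl : Odd l := hfact ▸ hl₁.mul hl₂.pow
  have hl₁l : l₁ ∣ l := hfact ▸ dvd_mul_right l₁ _
  have hsummand := funext (summand_eq hl hsf hl₁l s)
  have hsum := summable_norm_term_coeff l l₁ hs
  have hη : ∀ s' : ℂ, 1 / 2 < s'.re → Multipliable fun p : Nat.Primes => etaP l l₁ s' p :=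
    fun _ => multipliable_etaP hl.pos.ne' hl₁l
  refine ⟨hsummand ▸ hsum.of_norm.mul_left _, ?_, hη⟩
  have hlhs := (Nat.Primes.hasProd_ite_dvd hl.pos.ne' fun p => (p : ℂ) / (p + 1)).mul
    (EulerProduct.eulerProduct_hasProd (term_coeff_one l l₁ s) (term_coeff_mul l l₁ s) hsum
      (term_zero _ _))
  have hrhs := ((riemannZeta_eulerProduct_hasProd hs).pow 3).mul (hη s (by linarith)).hasProd
  rw [hsummand, tsum_mul_left, mul_assoc,
    hlhs.unique (hrhs.congr_fun fun p => eulerFactor_eq hl hl₁l (by linarith) p.2)]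
  ring
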